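/- arXiv:1303.5342 — 2 statements merged into one kernel-verified Lean document; each statement's English description precedes it below -/
import Mathlib

section
/- Let u_1,…,u_m and w_1,…,w_m be vectors in a finite-dimensional complex inner product space H. If the Gramian of the u_i is less than or equal to the Gramian of the w_i in the positive semidefinite order, then there exists a contraction L on H (operator norm ≤ 1) with L(w_i) = u_i for all i. -/
open scoped ComplexOrder

/-! The hypothesis says exactly that `‖∑ cᵢ • uᵢ‖ ≤ ‖∑ cᵢ • wᵢ‖` for every coefficient vector `c`.
Hence `∑ cᵢ • wᵢ ↦ ∑ cᵢ • uᵢ` is a well-defined contraction on the span of the `wᵢ`, and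
precomposing it with the orthogonal projection onto that span extends it to a contraction of `H`. -/

namespace LinearMap

variable {K V V' V'' : Type*} [DivisionRing K] [AddCommGroup V] [Module K V]
  [AddCommGroup V'] [Module K V'] [AddCommGroup V''] [Module K V'']

theorem exists_comp_eq_of_ker_le {f : V →ₗ[K] V'} {g : V →ₗ[K] V''} (h : ker f ≤ ker g) :
    ∃ l : V' →ₗ[K] V'', l ∘ₗ f = g := by
  obtain ⟨l, hl⟩ := exists_extend ((ker f).liftQ g h ∘ₗ f.quotKerEquivRange.symm.toLinearMap)
  refine ⟨l, ext fun x => ?_⟩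
  simpa using LinearMap.congr_fun hl ⟨f x, mem_range_self f x⟩

end LinearMap

section

variable {𝕜 V E F : Type*} [RCLike 𝕜] [AddCommGroup V] [Module 𝕜 V]
  [NormedAddCommGroup E] [InnerProductSpace 𝕜 E] [NormedAddCommGroup F] [NormedSpace 𝕜 F]

theorem exists_norm_le_one_comp_eq_of_norm_le {S : V →ₗ[𝕜] E} {T : V →ₗ[𝕜] F}
    [(LinearMap.range S).HasOrthogonalProjection] (hST : ∀ x, ‖T x‖ ≤ ‖S x‖) :
    ∃ L : E →L[𝕜] F, ‖L‖ ≤ 1 ∧ ∀ x, L (S x) = T x := by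
  have hker : LinearMap.ker S ≤ LinearMap.ker T := fun x hx => by
    rw [LinearMap.mem_ker] at hx ⊢
    simpa [hx] using hST x
  obtain ⟨l, hl⟩ := LinearMap.exists_comp_eq_of_ker_le hker
  have hlS : ∀ x, l (S x) = T x := LinearMap.congr_fun hl
  set P := (LinearMap.range S).starProjection
  have hbound : ∀ y, ‖l (P y)‖ ≤ 1 * ‖y‖ := fun y => by
    obtain ⟨x, hx⟩ := (LinearMap.range S).starProjection_apply_mem y
    calc ‖l (P y)‖ = ‖T x‖ := by rw [← hx, hlS]
      _ ≤ ‖P y‖ := hx ▸ hST x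
      _ ≤ 1 * ‖y‖ := by rw [one_mul]; exact (LinearMap.range S).norm_starProjection_apply_le y
  refine ⟨(l ∘ₗ P.toLinearMap).mkContinuous 1 hbound,
    LinearMap.mkContinuous_norm_le _ zero_le_one _, fun x => ?_⟩
  simp [P, Submodule.starProjection_eq_self_iff.mpr (LinearMap.mem_range_self S x), hlS]

theorem norm_sum_smul_le_of_posSemidef_gram_sub {n : Type*} [Fintype n] {u w : n → E}
    (h : (Matrix.gram 𝕜 w - Matrix.gram 𝕜 u).PosSemidef) (c : n → 𝕜) :
    ‖∑ i, c i • u i‖ ≤ ‖∑ i, c i • w i‖ := by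
  have hc := h.dotProduct_mulVec_nonneg c
  rw [Matrix.sub_mulVec, dotProduct_sub, Matrix.star_dotProduct_gram_mulVec,
    Matrix.star_dotProduct_gram_mulVec, inner_self_eq_norm_sq_to_K, inner_self_eq_norm_sq_to_K,
    sub_nonneg] at hc
  exact (sq_le_sq₀ (norm_nonneg _) (norm_nonneg _)).mp (by exact_mod_cast hc)

end

theorem exists_contraction_of_gram_le_general {H : Type*} [NormedAddCommGroup H]
    [InnerProductSpace ℂ H] {m : ℕ}
    (u w : Fin m → H)
    (h : (Matrix.of fun i j : Fin m =>
            (inner ℂ (w i) (w j) : ℂ) - inner ℂ (u i) (u j)).PosSemidef) :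
    ∃ L : H →L[ℂ] H, ‖L‖ ≤ 1 ∧ ∀ i, L (w i) = u i := by
  obtain ⟨L, hL, hLw⟩ := exists_norm_le_one_comp_eq_of_norm_le
    (S := Fintype.linearCombination ℂ w) (T := Fintype.linearCombination ℂ u) fun c => by
      simpa [Fintype.linearCombination_apply] using norm_sum_smul_le_of_posSemidef_gram_sub h c
  exact ⟨L, hL, fun i => by simpa using hLw (Pi.single i 1)⟩

theorem exists_contraction_of_gram_le {H : Type*} [NormedAddCommGroup H]
    [InnerProductSpace ℂ H] [FiniteDimensional ℂ H] {m : ℕ}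
    (u w : Fin m → H)
    (h : (Matrix.of fun i j : Fin m =>
            (inner ℂ (w i) (w j) : ℂ) - inner ℂ (u i) (u j)).PosSemidef) :
    ∃ L : H →L[ℂ] H, ‖L‖ ≤ 1 ∧ ∀ i, L (w i) = u i :=
  exists_contraction_of_gram_le_general u w h
end

section
/- For a 2×2 complex matrix A, both eigenvalues of A have modulus 1 if and only if (tr A, det A) lies in the distinguished boundary bΓ of the symmetrized bidisc, i.e., |det A| = 1 and tr A = conj(tr A)·det A and |tr A| ≤ 2. -/
theorem eigenvalues_unimodular_iff_bGamma (A : Matrix (Fin 2) (Fin 2) ℂ) :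
    (∀ μ ∈ A.charpoly.roots, ‖μ‖ = 1) ↔
      (‖A.det‖ = 1 ∧ A.trace = (starRingEnd ℂ) A.trace * A.det ∧ ‖A.trace‖ ≤ 2) := by
  have hcard : A.charpoly.roots.card = 2 := by
    have h := (Polynomial.Splits.natDegree_eq_card_roots
      (IsAlgClosed.splits (k := ℂ) A.charpoly)).symm
    rw [h, Matrix.charpoly_natDegree_eq_dim, Fintype.card_fin]
  obtain ⟨a, b, hab⟩ := Multiset.card_eq_two.mp hcard
  have htr : A.trace = a + b := by
    rw [Matrix.trace_eq_sum_roots_charpoly, hab]; simp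
  have hdet : A.det = a * b := by
    rw [Matrix.det_eq_prod_roots_charpoly, hab]; simp
  rw [hab, htr, hdet]
  constructor
  · intro h
    have ha : ‖a‖ = 1 := h a (by simp)
    have hb : ‖b‖ = 1 := h b (by simp)
    have hca : (starRingEnd ℂ) a * a = 1 := by
      rw [mul_comm, Complex.mul_conj', ha]; norm_num
    have hcb : (starRingEnd ℂ) b * b = 1 := by
      rw [mul_comm, Complex.mul_conj', hb]; norm_num
    refine ⟨by simp [ha, hb], ?_, ?_⟩
    · rw [map_add]
      calc a + b = ((starRingEnd ℂ) a * a) * b + ((starRingEnd ℂ) b * b) * a := by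
            rw [hca, hcb]; ring
        _ = ((starRingEnd ℂ) a + (starRingEnd ℂ) b) * (a * b) := by ring
    · calc ‖a + b‖ ≤ ‖a‖ + ‖b‖ := norm_add_le a b
        _ ≤ 2 := by rw [ha, hb]; norm_num
  · rintro ⟨hp, hs, hle⟩
    have hab1 : ‖a‖ * ‖b‖ = 1 := by rw [← norm_mul]; exact hp
    have ha0 : a ≠ 0 := by intro h; rw [h] at hab1; simp at hab1
    have hapos : 0 < ‖a‖ := norm_pos_iff.mpr ha0
    have hb0 : b ≠ 0 := by intro h; rw [h] at hab1; simp at hab1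
    have hbpos : 0 < ‖b‖ := norm_pos_iff.mpr hb0
    -- key equation: a + b = ‖a‖² b + ‖b‖² a
    have key : a + b = (‖a‖ : ℂ)^2 * b + (‖b‖ : ℂ)^2 * a := by
      rw [map_add] at hs
      calc a + b = ((starRingEnd ℂ) a * a) * b + ((starRingEnd ℂ) b * b) * a := by
            linear_combination hs
        _ = (‖a‖ : ℂ)^2 * b + (‖b‖ : ℂ)^2 * a := by
            rw [mul_comm ((starRingEnd ℂ) a) a, mul_comm ((starRingEnd ℂ) b) b,
              Complex.mul_conj', Complex.mul_conj']
    have hb2 : (‖b‖ : ℂ)^2 * (‖a‖ : ℂ)^2 = 1 := by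
      have h := hab1
      have : ((‖a‖ * ‖b‖ : ℝ) : ℂ) = 1 := by rw [h]; norm_num
      push_cast at this
      linear_combination ((‖a‖:ℂ) * (‖b‖:ℂ) + 1) * this
    have hnorms : ‖a‖ = 1 := by
      by_contra hne
      have hsq : (‖a‖ : ℂ)^2 - 1 ≠ 0 := by
        intro h
        have h1 : ((‖a‖^2 : ℝ) : ℂ) = ((1 : ℝ) : ℂ) := by push_cast; linear_combination h
        have h2 : (‖a‖ : ℝ)^2 = 1 := by exact_mod_cast h1
        have h3 : (‖a‖ - 1) * (‖a‖ + 1) = 0 := by nlinarith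
        rcases mul_eq_zero.mp h3 with h4 | h4
        · exact hne (by linarith)
        · linarith
      have hba : a = b * (‖a‖ : ℂ)^2 := by
        have h2 : a * ((‖a‖:ℂ)^2 - 1) = (b * (‖a‖:ℂ)^2) * ((‖a‖:ℂ)^2 - 1) := by
          linear_combination (‖a‖:ℂ)^2 * key + a * hb2
        exact mul_right_cancel₀ hsq h2
      have hsum : a + b = b * ((‖a‖:ℂ)^2 + 1) := by linear_combination hba
      have hns : ‖a + b‖ = ‖b‖ * (‖a‖^2 + 1) := by
        rw [hsum, norm_mul]
        congr 1
        have h5 : ((‖a‖:ℂ)^2 + 1) = ((‖a‖^2 + 1 : ℝ) : ℂ) := by push_cast; ring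
        rw [h5, Complex.norm_real, Real.norm_of_nonneg (by positivity)]
      rw [hns] at hle
      have h4 : ‖b‖ * (‖a‖-1)^2 ≤ ‖b‖ * 0 := by nlinarith
      have h5 : (‖a‖-1)^2 ≤ 0 := le_of_mul_le_mul_left h4 hbpos
      have h6 : (‖a‖-1)^2 = 0 := le_antisymm h5 (sq_nonneg _)
      have h7 : ‖a‖ - 1 = 0 := by
        exact pow_eq_zero_iff (by norm_num) |>.mp h6
      exact hne (by linarith)
    intro μ hμ
    have hbn : ‖b‖ = 1 := by
      have h := hab1
      rw [hnorms] at h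
      linarith
    simp only [Multiset.insert_eq_cons, Multiset.mem_cons, Multiset.mem_singleton] at hμ
    rcases hμ with h | h <;> rw [h] <;> assumption
end
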